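/- Let f : ℝⁿ → ℝⁿ (n ≥ 1) be a map such that for every q ∈ ℝⁿ, f is differentiable at q with invertible derivative, the remainder estimate f(q + x) − f(q) − D_q f(x) = o(|x|) holds uniformly in q, and there exist sequences of balls B(qᵢ, rᵢ) with rᵢ → 0, cl(B(qᵢ, rᵢ)) → {p} in Hausdorff distance, and f(∂B(qᵢ, rᵢ)) a Euclidean sphere for each i. Then D_p f is conformal: D_p f = λ • T, λ > 0, T a linear isometry. -/

import Mathlib

open Filter Metric Topology

/-! Near qᵢ the map f is uniformly close to the linear map A = D qᵢ, so the image of the sphere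
S(qᵢ, rᵢ) lies in a thin annulus around S(c, ρ): ‖w ± rᵢ • A z‖ = ρ + O(ε rᵢ) for every unit z,
where w = f qᵢ - c. The parallelogram law turns this into rᵢ² ‖A z‖² + ‖w‖² = ρ² + O(ε rᵢ ρ), and
ρ = O(rᵢ) because the image sphere has diameter at most about 2 rᵢ ‖A‖. Hence ‖A z‖² varies by
O(ε) over the unit sphere; as D qᵢ → D p, the map D p sends the unit sphere into a sphere, and an
injective linear map with this property is a positive multiple of an isometry. -/

theorem dist_le_hausdorffDist_closedBall_singleton {α : Type*} [MetricSpace α] {x p : α} {r : ℝ}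
    (hr : 0 ≤ r) : dist x p ≤ hausdorffDist (closedBall x r) {p} := by
  have hfin : hausdorffEDist (closedBall x r) {p} ≠ ⊤ :=
    hausdorffEDist_ne_top_of_nonempty_of_bounded (nonempty_closedBall.mpr hr)
      (Set.singleton_nonempty p) isBounded_closedBall Bornology.isBounded_singleton
  simpa [infDist_singleton] using infDist_le_hausdorffDist_of_mem (mem_closedBall_self hr) hfin

theorem sq_norm_le_sq_norm_add_of_annulus {F : Type*} [NormedAddCommGroup F]
    [InnerProductSpace ℝ F] {w a b : F} {ρ t : ℝ}
    (ha₁ : |‖w + a‖ - ρ| ≤ t) (ha₂ : |‖w - a‖ - ρ| ≤ t)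
    (hb₁ : |‖w + b‖ - ρ| ≤ t) (hb₂ : |‖w - b‖ - ρ| ≤ t) :
    ‖a‖ ^ 2 ≤ ‖b‖ ^ 2 + 4 * t * (ρ + t) := by
  rw [abs_sub_le_iff, sub_le_iff_le_add'] at ha₁ ha₂ hb₁ hb₂
  have hpa := parallelogram_law_with_norm ℝ w a
  have hpb := parallelogram_law_with_norm ℝ w b
  have hρt : 0 ≤ ρ + t := (norm_nonneg _).trans ha₁.1
  have hupper : ‖a‖ ^ 2 + ‖w‖ ^ 2 ≤ (ρ + t) ^ 2 := by
    nlinarith [mul_self_le_mul_self (norm_nonneg _) ha₁.1,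
      mul_self_le_mul_self (norm_nonneg _) ha₂.1]
  rcases le_or_gt t ρ with hle | hlt
  · have hlower : (ρ - t) ^ 2 ≤ ‖b‖ ^ 2 + ‖w‖ ^ 2 := by
      nlinarith [mul_self_le_mul_self (sub_nonneg.mpr hle) (sub_le_comm.mp hb₁.2),
        mul_self_le_mul_self (sub_nonneg.mpr hle) (sub_le_comm.mp hb₂.2)]
    nlinarith [sq_nonneg t]
  · nlinarith [sq_nonneg ‖b‖, sq_nonneg ‖w‖]

section ImageOfSphere

variable {E F : Type*} [NormedAddCommGroup E] [NormedSpace ℝ E]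

theorem radius_le_of_sphere_subset_image [NormedAddCommGroup F] [NormedSpace ℝ F]
    {f : E → F} {A : E →L[ℝ] F} {q : E} {s η : ℝ} {c : F} {ρ : ℝ}
    (hf : ∀ x, ‖x‖ = s → ‖f (q + x) - f q - A x‖ ≤ η * s)
    (hsub : sphere c ρ ⊆ f '' sphere q s) (hne : (sphere c ρ).Nonempty) :
    ρ ≤ s * (‖A‖ + η) := by
  have hnear : ∀ a ∈ sphere q s, dist (f a) (f q) ≤ s * (‖A‖ + η) := by
    intro a ha
    rw [mem_sphere_iff_norm] at ha
    have h := hf (a - q) ha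
    rw [add_sub_cancel] at h
    have hA : ‖A (a - q)‖ ≤ ‖A‖ * s := ha ▸ A.le_opNorm (a - q)
    calc dist (f a) (f q) = ‖(f a - f q - A (a - q)) + A (a - q)‖ := by
          rw [dist_eq_norm, sub_add_cancel]
      _ ≤ η * s + ‖A‖ * s := (norm_add_le _ _).trans (add_le_add h hA)
      _ = s * (‖A‖ + η) := by ring
  obtain ⟨u, hu⟩ := hne
  have hu' : c + (c - u) ∈ sphere c ρ := by
    rw [mem_sphere_iff_norm, add_sub_cancel_left, norm_sub_rev]
    exact mem_sphere_iff_norm.mp hu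
  obtain ⟨a, ha, rfl⟩ := hsub hu
  obtain ⟨b, hb, hfb⟩ := hsub hu'
  have hdiam : dist (f a) (f b) = 2 * ρ := by
    rw [hfb, dist_eq_norm, show f a - (c + (c - f a)) = (2 : ℝ) • (f a - c) by module,
      norm_smul, mem_sphere_iff_norm.mp hu, Real.norm_two]
  linarith [dist_triangle_right (f a) (f b) (f q), hnear a ha, hnear b hb]

theorem abs_norm_add_smul_apply_sub_radius_le [NormedAddCommGroup F] [NormedSpace ℝ F]
    {f : E → F} {A : E →L[ℝ] F} {q : E} {s η : ℝ} {c : F} {ρ : ℝ} (hs : 0 < s)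
    (hf : ∀ x, ‖x‖ = s → ‖f (q + x) - f q - A x‖ ≤ η * s)
    (hsub : f '' sphere q s ⊆ sphere c ρ) {z : E} (hz : ‖z‖ = 1) :
    |‖f q - c + s • A z‖ - ρ| ≤ η * s := by
  have hsz : ‖s • z‖ = s := by rw [norm_smul, hz, Real.norm_of_nonneg hs.le, mul_one]
  have hmem : ‖f (q + s • z) - c‖ = ρ :=
    mem_sphere_iff_norm.mp (hsub ⟨q + s • z, by simpa [mem_sphere_iff_norm] using hsz, rfl⟩)
  calc |‖f q - c + s • A z‖ - ρ| = |‖f q - c + s • A z‖ - ‖f (q + s • z) - c‖| := by rw [hmem]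
    _ ≤ ‖(f q - c + s • A z) - (f (q + s • z) - c)‖ := abs_norm_sub_norm_le _ _
    _ = ‖f (q + s • z) - f q - A (s • z)‖ := by rw [← norm_neg, map_smul]; congr 1; abel
    _ ≤ η * s := hf _ hsz

theorem sq_norm_apply_le_of_image_sphere_eq_sphere [NormedAddCommGroup F]
    [InnerProductSpace ℝ F] {f : E → F} {A : E →L[ℝ] F} {q : E} {s η : ℝ} {c : F} {ρ : ℝ}
    (hs : 0 < s) (hη : 0 ≤ η) (hf : ∀ x, ‖x‖ = s → ‖f (q + x) - f q - A x‖ ≤ η * s)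
    (hsph : f '' sphere q s = sphere c ρ) {x y : E} (hx : ‖x‖ = 1) (hy : ‖y‖ = 1) :
    ‖A x‖ ^ 2 ≤ ‖A y‖ ^ 2 + 4 * η * (‖A‖ + 2 * η) := by
  have hann : ∀ z : E, ‖z‖ = 1 → |‖f q - c + s • A z‖ - ρ| ≤ η * s :=
    fun z hz => abs_norm_add_smul_apply_sub_radius_le hs hf hsph.subset hz
  have hann' : ∀ z : E, ‖z‖ = 1 → |‖f q - c - s • A z‖ - ρ| ≤ η * s := fun z hz => by
    simpa [sub_eq_add_neg] using hann (-z) (by rwa [norm_neg])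
  have hρ : ρ ≤ s * (‖A‖ + η) := by
    refine radius_le_of_sphere_subset_image hf hsph.symm.subset ?_
    rw [← hsph]
    exact ⟨_, ⟨q + s • x, by simp [norm_smul, hx, hs.le], rfl⟩⟩
  have hmain := sq_norm_le_sq_norm_add_of_annulus (hann x hx) (hann' x hx) (hann y hy) (hann' y hy)
  rw [norm_smul, norm_smul, Real.norm_of_nonneg hs.le, mul_pow, mul_pow] at hmain
  have hρ' : 4 * (η * s) * ρ ≤ 4 * (η * s) * (s * (‖A‖ + η)) :=
    mul_le_mul_of_nonneg_left hρ (by positivity)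
  refine le_of_mul_le_mul_left ?_ (by positivity : (0 : ℝ) < s ^ 2)
  nlinarith

end ImageOfSphere

section Conformal

variable {E F : Type*} [NormedAddCommGroup E] [NormedSpace ℝ E]
  [NormedAddCommGroup F] [NormedSpace ℝ F]

theorem exists_pos_norm_apply_eq_mul_norm {B : E →L[ℝ] F} (hB : Function.Injective B)
    (h : ∀ x y : E, ‖x‖ = 1 → ‖y‖ = 1 → ‖B x‖ ≤ ‖B y‖) :
    ∃ lam : ℝ, 0 < lam ∧ ∀ x, ‖B x‖ = lam * ‖x‖ := by
  rcases subsingleton_or_nontrivial E with hE | hE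
  · exact ⟨1, one_pos, fun x => by simp [Subsingleton.elim x 0]⟩
  obtain ⟨e, he⟩ := exists_norm_eq E zero_le_one
  have hunit : ∀ x : E, ‖x‖ = 1 → ‖B x‖ = ‖B e‖ := fun x hx => (h x e hx he).antisymm (h e x he hx)
  refine ⟨‖B e‖, norm_pos_iff.mpr ((map_ne_zero_iff B hB).mpr (norm_ne_zero_iff.mp (by simp [he]))),
    fun x => ?_⟩
  rcases eq_or_ne x 0 with rfl | hx
  · simp
  have hx' : ‖x‖ ≠ 0 := norm_ne_zero_iff.mpr hx
  have := hunit (‖x‖⁻¹ • x) (by rw [norm_smul, norm_inv, norm_norm, inv_mul_cancel₀ hx'])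
  rw [map_smul, norm_smul, norm_inv, norm_norm, inv_mul_eq_iff_eq_mul₀ hx'] at this
  rw [this, mul_comm]

theorem exists_linearIsometry_eq_smul_of_norm_apply_eq_mul_norm {B : E →L[ℝ] F} {lam : ℝ}
    (hlam : 0 < lam) (h : ∀ x, ‖B x‖ = lam * ‖x‖) :
    ∃ T : E →ₗᵢ[ℝ] F, ∀ x, B x = lam • T x :=
  ⟨⟨lam⁻¹ • B.toLinearMap, fun x => by
      simp [norm_smul, h, abs_of_pos hlam, inv_mul_cancel_left₀ hlam.ne']⟩,
    fun x => by simp [smul_smul, mul_inv_cancel₀ hlam.ne']⟩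

theorem norm_apply_le_of_tendsto {ι : Type*} {l : Filter ι} [l.NeBot] {A : ι → E →L[ℝ] F}
    {B : E →L[ℝ] F} (hA : Tendsto A l (𝓝 B)) {x y : E}
    (h : ∀ η > 0, ∀ᶠ i in l, ‖A i x‖ ^ 2 ≤ ‖A i y‖ ^ 2 + 4 * η * (‖A i‖ + 2 * η)) :
    ‖B x‖ ≤ ‖B y‖ := by
  have hB : ∀ η > 0, ‖B x‖ ^ 2 ≤ ‖B y‖ ^ 2 + 4 * η * (‖B‖ + 2 * η) := fun η hη =>
    le_of_tendsto_of_tendsto ((by fun_prop : Continuous fun C : E →L[ℝ] F => ‖C x‖ ^ 2).tendsto B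
      |>.comp hA) ((by fun_prop : Continuous fun C : E →L[ℝ] F =>
        ‖C y‖ ^ 2 + 4 * η * (‖C‖ + 2 * η)).tendsto B |>.comp hA) (h η hη)
  have hlim : Tendsto (fun η : ℝ => ‖B y‖ ^ 2 + 4 * η * (‖B‖ + 2 * η)) (𝓝[>] 0)
      (𝓝 (‖B y‖ ^ 2)) :=
    tendsto_nhdsWithin_of_tendsto_nhds <| (by fun_prop : Continuous fun η : ℝ =>
      ‖B y‖ ^ 2 + 4 * η * (‖B‖ + 2 * η)).tendsto' 0 _ (by simp)
  have := ge_of_tendsto hlim (eventually_nhdsWithin_of_forall hB)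
  exact (pow_le_pow_iff_left₀ (norm_nonneg _) (norm_nonneg _) two_ne_zero).mp this

end Conformal

theorem stmt_17_general (n : ℕ)
    (f : EuclideanSpace ℝ (Fin n) → EuclideanSpace ℝ (Fin n))
    (D : EuclideanSpace ℝ (Fin n) → EuclideanSpace ℝ (Fin n) →L[ℝ] EuclideanSpace ℝ (Fin n))
    (hinvD : ∀ q, Function.Bijective (D q))
    (hcont : Continuous D)
    (hunif : ∀ ε > (0 : ℝ), ∃ δ > (0 : ℝ), ∀ q x : EuclideanSpace ℝ (Fin n), ‖x‖ ≤ δ →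
      ‖f (q + x) - f q - D q x‖ ≤ ε * ‖x‖)
    (p : EuclideanSpace ℝ (Fin n)) (q : ℕ → EuclideanSpace ℝ (Fin n)) (r : ℕ → ℝ)
    (hr : ∀ i, 0 < r i) (hrt : Tendsto r atTop (nhds 0))
    (hH : Tendsto (fun i => Metric.hausdorffDist (Metric.closedBall (q i) (r i))
      ({p} : Set (EuclideanSpace ℝ (Fin n)))) atTop (nhds 0))
    (hsph : ∀ i, ∃ (c : EuclideanSpace ℝ (Fin n)) (ρ : ℝ), 0 < ρ ∧
      f '' Metric.sphere (q i) (r i) = Metric.sphere c ρ) :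
    ∃ (lam : ℝ) (T : EuclideanSpace ℝ (Fin n) →ₗᵢ[ℝ] EuclideanSpace ℝ (Fin n)),
      0 < lam ∧ ∀ x, D p x = lam • T x := by
  have hq : Tendsto q atTop (𝓝 p) := tendsto_iff_dist_tendsto_zero.mpr <| squeeze_zero
    (fun _ => dist_nonneg) (fun i => dist_le_hausdorffDist_closedBall_singleton (hr i).le) hH
  have hle : ∀ x y : EuclideanSpace ℝ (Fin n), ‖x‖ = 1 → ‖y‖ = 1 → ‖D p x‖ ≤ ‖D p y‖ := by
    intro x y hx hy
    refine norm_apply_le_of_tendsto ((hcont.tendsto p).comp hq) fun η hη => ?_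
    obtain ⟨δ, hδ, hu⟩ := hunif η hη
    filter_upwards [hrt.eventually (ge_mem_nhds hδ)] with i hi
    obtain ⟨c, ρ, -, hsph⟩ := hsph i
    exact sq_norm_apply_le_of_image_sphere_eq_sphere (hr i) hη.le
      (fun z hz => hz ▸ hu _ _ (hz ▸ hi)) hsph hx hy
  obtain ⟨lam, hlam, hnorm⟩ := exists_pos_norm_apply_eq_mul_norm (hinvD p).1 hle
  obtain ⟨T, hT⟩ := exists_linearIsometry_eq_smul_of_norm_apply_eq_mul_norm hlam hnorm
  exact ⟨lam, T, hlam, hT⟩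

theorem stmt_17 (n : ℕ) (hn : 1 ≤ n)
    (f : EuclideanSpace ℝ (Fin n) → EuclideanSpace ℝ (Fin n))
    (D : EuclideanSpace ℝ (Fin n) → EuclideanSpace ℝ (Fin n) →L[ℝ] EuclideanSpace ℝ (Fin n))
    (hdiff : ∀ q, HasFDerivAt f (D q) q)
    (hinvD : ∀ q, Function.Bijective (D q))
    (hcont : Continuous D)
    (hunif : ∀ ε > (0 : ℝ), ∃ δ > (0 : ℝ), ∀ q x : EuclideanSpace ℝ (Fin n), ‖x‖ ≤ δ →
      ‖f (q + x) - f q - D q x‖ ≤ ε * ‖x‖)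
    (p : EuclideanSpace ℝ (Fin n)) (q : ℕ → EuclideanSpace ℝ (Fin n)) (r : ℕ → ℝ)
    (hr : ∀ i, 0 < r i) (hrt : Tendsto r atTop (nhds 0))
    (hH : Tendsto (fun i => Metric.hausdorffDist (Metric.closedBall (q i) (r i))
      ({p} : Set (EuclideanSpace ℝ (Fin n)))) atTop (nhds 0))
    (hsph : ∀ i, ∃ (c : EuclideanSpace ℝ (Fin n)) (ρ : ℝ), 0 < ρ ∧
      f '' Metric.sphere (q i) (r i) = Metric.sphere c ρ) :
    ∃ (lam : ℝ) (T : EuclideanSpace ℝ (Fin n) →ₗᵢ[ℝ] EuclideanSpace ℝ (Fin n)),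
      0 < lam ∧ ∀ x, D p x = lam • T x :=
  stmt_17_general n f D hinvD hcont hunif p q r hr hrt hH hsph
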